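/- The birational inverse of the projection π_L : s(P^2 × P^1) ⇢ P^3 from the line L = F_1 ∩ F_2 is given by a linear system of quadric surfaces in P^3 whose base locus is B ∪ {P}, where P = π_L(F_1) and B = π_L(F_2). -/

import Mathlib

open Projectivization Set

/-- `ℙ^(n-1)`-style projective space of the vector space `Fin n → k`. -/
abbrev Pk (k : Type*) [Field k] (n : ℕ) := Projectivization k (Fin n → k)

/-- Segre map on vectors. -/
def segV (k : Type*) [Field k] (x : Fin 3 → k) (y : Fin 2 → k) : Fin 6 → k :=
  fun i => x ⟨i.1 / 2, by have := i.2; omega⟩ * y ⟨i.1 % 2, by omega⟩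

theorem segV_ne_zero (k : Type*) [Field k] {x : Fin 3 → k} {y : Fin 2 → k}
    (hx : x ≠ 0) (hy : y ≠ 0) : segV k x y ≠ 0 := by
  obtain ⟨a, ha⟩ := Function.ne_iff.mp hx
  obtain ⟨b, hb⟩ := Function.ne_iff.mp hy
  intro h
  have ha2 := a.2
  have hb2 := b.2
  have h6 : 2 * a.1 + b.1 < 6 := by omega
  have hkey := congrFun h ⟨2 * a.1 + b.1, h6⟩
  simp only [segV, Pi.zero_apply] at hkey
  have e1 : (⟨(2 * a.1 + b.1) / 2, by omega⟩ : Fin 3) = a := Fin.ext (by simp; omega)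
  have e2 : (⟨(2 * a.1 + b.1) % 2, by omega⟩ : Fin 2) = b := Fin.ext (by simp; omega)
  rw [e1, e2] at hkey
  exact (mul_ne_zero ha hb) hkey

/-- The Segre embedding `s : ℙ² × ℙ¹ → ℙ⁵`. -/
noncomputable def segre (k : Type*) [Field k] (p : Pk k 3) (q : Pk k 2) : Pk k 6 :=
  Projectivization.mk k (segV k p.rep q.rep) (segV_ne_zero k p.rep_nonzero q.rep_nonzero)

/-- The Segre threefold `X = s(ℙ² × ℙ¹) ⊆ ℙ⁵`. -/
def SegreX (k : Type*) [Field k] : Set (Pk k 6) := {z | ∃ p q, z = segre k p q}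

/-- The set of points of projective space lying in a linear subspace `W`. -/
def projLin {k : Type*} [Field k] {n : ℕ} (W : Submodule k (Fin n → k)) : Set (Pk k n) :=
  {p | p.rep ∈ W}

/-- The plane `F₁ = s(ℙ² × {a})` of the ruling. -/
def F1set (k : Type*) [Field k] (a : Pk k 2) : Set (Pk k 6) := {z | ∃ p, z = segre k p a}
/-- The quadric surface `F₂ = s(l × ℙ¹)` for a line `l ⊆ ℙ²` (given by a 2-dimensional
vector subspace of `Fin 3 → k`). -/
def F2set (k : Type*) [Field k] (l : Submodule k (Fin 3 → k)) : Set (Pk k 6) :=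
  {z | ∃ p q, p.rep ∈ l ∧ z = segre k p q}

/-- The 2-dimensional vector subspace corresponding to the line `L = F₁ ∩ F₂ ⊆ ℙ⁵`. -/
def WL (k : Type*) [Field k] (l : Submodule k (Fin 3 → k)) (a : Pk k 2) :
    Submodule k (Fin 6 → k) :=
  Submodule.span k {v | ∃ x ∈ l, v = segV k x a.rep}

/-- A subset of projective space is (Zariski-)closed algebraic iff it is the common zero set
of a family of homogeneous polynomials. -/
def AlgSet {k : Type*} [Field k] {n : ℕ} (S : Set (Pk k n)) : Prop :=
  ∃ T : Set (MvPolynomial (Fin n) k), (∀ f ∈ T, ∃ d, f.IsHomogeneous d) ∧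
    S = {p | ∀ f ∈ T, MvPolynomial.eval p.rep f = 0}

/-- The linear projection `ℙ⁵ ⇢ ℙ³` induced by a linear map `π` (defined away from the
projectivization of `ker π`, junk value elsewhere). -/
noncomputable def projFrom (k : Type*) [Field k] (π : (Fin 6 → k) →ₗ[k] (Fin 4 → k))
    (p : Pk k 6) : Pk k 4 :=
  letI := Classical.propDecidable
  if h : π p.rep ≠ 0 then Projectivization.mk k (π p.rep) h
  else Projectivization.mk k (fun _ => 1) (fun h0 => one_ne_zero (congrFun h0 0))

/-! Choose linear forms `α` on `k³` with kernel `l` and `β` on `k²` with kernel `a`. Reading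
`z ∈ k⁶` as a `3 × 2` matrix `M`, the maps `z ↦ M β` and `z ↦ αᵀ M` vanish together exactly on
`l ⊗ a`, the kernel of `π`, so they descend to linear maps `ξ : k⁴ → k³` and `η : k⁴ → k²` with
`ξ (π (u ⊗ v)) = β(v) u` and `η (π (u ⊗ v)) = α(u) v`. Hence `r ↦ ξ r ⊗ η r`, whose coordinates
are six quadrics, sends `π (u ⊗ v)` to `α(u) β(v) (u ⊗ v)`: it inverts `π` off `F₁ ∪ F₂`. Its base
locus is `{ξ = 0} ∪ {η = 0}`; as `ξ, η` are jointly injective and `α ∘ ξ = β ∘ η`, these are the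
point `π(F₁)` and the line `π(F₂)`. -/

open Matrix MvPolynomial

section Segre

variable {k : Type*} [Field k]

lemma segV_finProdFinEquiv (x : Fin 3 → k) (y : Fin 2 → k) (i : Fin 3) (j : Fin 2) :
    segV k x y (finProdFinEquiv (i, j)) = x i * y j := by
  simp only [segV, finProdFinEquiv_apply_val]
  congr 2 <;> ext <;> simp <;> omega

lemma segV_apply (x : Fin 3 → k) (y : Fin 2 → k) (m : Fin 6) :
    segV k x y m = x (Fin.divNat (n := 2) m) * y (Fin.modNat (m := 3) m) := rfl

lemma segV_smul_left (c : k) (x : Fin 3 → k) (y : Fin 2 → k) :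
    segV k (c • x) y = c • segV k x y := by
  ext m; simp [segV, mul_assoc]

lemma segV_smul_right (c : k) (x : Fin 3 → k) (y : Fin 2 → k) :
    segV k x (c • y) = c • segV k x y := by
  ext m; simp [segV]; ring

lemma segV_eq_zero_iff {x : Fin 3 → k} {y : Fin 2 → k} : segV k x y = 0 ↔ x = 0 ∨ y = 0 := by
  refine ⟨fun h => ?_, ?_⟩
  · by_contra! hxy
    exact segV_ne_zero k hxy.1 hxy.2 h
  · rintro (rfl | rfl) <;> ext m <;> simp [segV]

def segMatrix : (Fin 6 → k) →ₗ[k] Matrix (Fin 3) (Fin 2) k where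
  toFun z := Matrix.of fun i j => z (finProdFinEquiv (i, j))
  map_add' _ _ := rfl
  map_smul' _ _ := rfl

@[simp]
lemma segMatrix_apply (z : Fin 6 → k) (i : Fin 3) (j : Fin 2) :
    segMatrix z i j = z (finProdFinEquiv (i, j)) := rfl

lemma segMatrix_injective : Function.Injective (segMatrix (k := k)) := by
  intro z w h
  ext m
  obtain ⟨⟨i, j⟩, rfl⟩ := (finProdFinEquiv (m := 3) (n := 2)).surjective m
  exact congrFun₂ h i j

lemma segMatrix_segV (x : Fin 3 → k) (y : Fin 2 → k) :
    segMatrix (segV k x y) = vecMulVec x y := by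
  ext i j
  rw [segMatrix_apply, segV_finProdFinEquiv, vecMulVec_apply]

end Segre

section Contractions

variable {k : Type*} [Field k]

def segMulVec (β : Fin 2 → k) : (Fin 6 → k) →ₗ[k] (Fin 3 → k) where
  toFun z := segMatrix z *ᵥ β
  map_add' z w := by rw [map_add, add_mulVec]
  map_smul' c z := by rw [map_smul, smul_mulVec]; rfl

def segVecMul (α : Fin 3 → k) : (Fin 6 → k) →ₗ[k] (Fin 2 → k) where
  toFun z := α ᵥ* segMatrix z
  map_add' z w := by rw [map_add, vecMul_add]
  map_smul' c z := by rw [map_smul, vecMul_smul]; rfl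

lemma segMulVec_segV (β : Fin 2 → k) (u : Fin 3 → k) (v : Fin 2 → k) :
    segMulVec β (segV k u v) = (β ⬝ᵥ v) • u := by
  change segMatrix (segV k u v) *ᵥ β = _
  rw [segMatrix_segV, vecMulVec_mulVec, op_smul_eq_smul, dotProduct_comm]

lemma segVecMul_segV (α : Fin 3 → k) (u : Fin 3 → k) (v : Fin 2 → k) :
    segVecMul α (segV k u v) = (α ⬝ᵥ u) • v := by
  change α ᵥ* segMatrix (segV k u v) = _
  rw [segMatrix_segV, vecMul_vecMulVec]

lemma dotProduct_segMulVec (α : Fin 3 → k) (β : Fin 2 → k) (z : Fin 6 → k) :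
    α ⬝ᵥ segMulVec β z = β ⬝ᵥ segVecMul α z := by
  change α ⬝ᵥ segMatrix z *ᵥ β = β ⬝ᵥ α ᵥ* segMatrix z
  rw [dotProduct_mulVec, dotProduct_comm]

lemma WL_eq_ker_inf_ker {l : Submodule k (Fin 3 → k)} {a : Pk k 2} {α : Fin 3 → k}
    {β : Fin 2 → k} (hα : ∀ u, α ⬝ᵥ u = 0 ↔ u ∈ l)
    (hβ : ∀ v, β ⬝ᵥ v = 0 ↔ v ∈ k ∙ a.rep) :
    WL k l a = LinearMap.ker (segMulVec β) ⊓ LinearMap.ker (segVecMul α) := by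
  have hβa : β ⬝ᵥ a.rep = 0 := (hβ _).2 (Submodule.mem_span_singleton_self _)
  apply le_antisymm
  · rw [WL, Submodule.span_le]
    rintro _ ⟨x, hx, rfl⟩
    simp [segMulVec_segV, segVecMul_segV, hβa, (hα x).2 hx]
  · rintro z ⟨hzβ, hzα⟩
    have hrows : ∀ i, ∃ c : k, c • a.rep = segMatrix z i := fun i =>
      Submodule.mem_span_singleton.1 <| (hβ _).1 <| by
        rw [dotProduct_comm]; exact congrFun (hzβ : segMatrix z *ᵥ β = 0) i
    choose c hc using hrows
    have hz : z = segV k c a.rep := segMatrix_injective <| by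
      ext i j
      rw [segMatrix_segV, vecMulVec_apply, ← hc, Pi.smul_apply, smul_eq_mul]
    replace hzα : segVecMul α z = 0 := hzα
    rw [hz, segVecMul_segV, smul_eq_zero] at hzα
    exact hz ▸ Submodule.subset_span ⟨c, (hα c).1 (hzα.resolve_right a.rep_nonzero), rfl⟩

end Contractions

lemma LinearMap.exists_factor_of_ker_le {K V W U : Type*} [DivisionRing K] [AddCommGroup V]
    [Module K V] [AddCommGroup W] [Module K W] [AddCommGroup U] [Module K U]
    {π : V →ₗ[K] W} (hπ : Function.Surjective π) {f : V →ₗ[K] U}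
    (h : LinearMap.ker π ≤ LinearMap.ker f) : ∃ g : W →ₗ[K] U, ∀ z, g (π z) = f z := by
  obtain ⟨s, hs⟩ := π.exists_rightInverse_of_surjective (LinearMap.range_eq_top.2 hπ)
  refine ⟨f ∘ₗ s, fun z => ?_⟩
  have hz : s (π z) - z ∈ LinearMap.ker π := by
    simp [LinearMap.mem_ker, ← LinearMap.comp_apply π s, hs]
  simpa [sub_eq_zero] using h hz

lemma exists_dotProduct_eq_zero_iff_mem {k : Type*} [Field k] {n : ℕ}
    (W : Submodule k (Fin n → k)) (hW : Module.finrank k W + 1 = n) :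
    ∃ a : Fin n → k, ∀ v, a ⬝ᵥ v = 0 ↔ v ∈ W := by
  have hlt : W < ⊤ := Submodule.lt_top_of_finrank_lt_finrank (by simp; omega)
  obtain ⟨f, hf, hWf⟩ := W.exists_le_ker_of_lt_top hlt
  have hker : LinearMap.ker f = W := by
    refine (Submodule.eq_of_le_of_finrank_le hWf ?_).symm
    have := Submodule.finrank_lt (mt LinearMap.ker_eq_top.1 hf)
    simp only [Module.finrank_fin_fun] at this
    omega
  refine ⟨(dotProductEquiv k (Fin n)).symm f, fun v => ?_⟩
  rw [← hker, LinearMap.mem_ker]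
  exact iff_of_eq (congrArg (· = 0) (LinearMap.congr_fun
    ((dotProductEquiv k (Fin n)).apply_symm_apply f) v))

lemma exists_isHomogeneous_one_eval_eq {k σ ι : Type*} [Field k] [Fintype σ] [DecidableEq σ]
    (f : (σ → k) →ₗ[k] (ι → k)) :
    ∃ L : ι → MvPolynomial σ k, (∀ i, (L i).IsHomogeneous 1) ∧ ∀ r i, eval r (L i) = f r i := by
  refine ⟨fun i => ∑ j, C (f (Pi.single j 1) i) * X j,
    fun i => IsHomogeneous.sum _ _ _ fun j _ => isHomogeneous_C_mul_X _ j, fun r i => ?_⟩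
  conv_rhs => rw [LinearMap.pi_apply_eq_sum_univ f r]
  simp only [map_sum, map_mul, eval_C, eval_X, Finset.sum_apply, Pi.smul_apply, smul_eq_mul]
  refine Finset.sum_congr rfl fun j _ => ?_
  have : (fun j' => if j = j' then (1 : k) else 0) = Pi.single j 1 := by
    ext j'; simp [Pi.single_apply, eq_comm]
  rw [mul_comm, this]

lemma exists_isHomogeneous_two_eval_eq_segV {k σ : Type*} [Field k] [Fintype σ] [DecidableEq σ]
    (f : (σ → k) →ₗ[k] (Fin 3 → k)) (g : (σ → k) →ₗ[k] (Fin 2 → k)) :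
    ∃ Q : Fin 6 → MvPolynomial σ k,
      (∀ m, (Q m).IsHomogeneous 2) ∧ ∀ r m, eval r (Q m) = segV k (f r) (g r) m := by
  obtain ⟨L, hL, hLf⟩ := exists_isHomogeneous_one_eval_eq f
  obtain ⟨L', hL', hL'g⟩ := exists_isHomogeneous_one_eval_eq g
  exact ⟨fun m => L (Fin.divNat (n := 2) m) * L' (Fin.modNat (m := 3) m),
    fun m => (hL _).mul (hL' _), fun r m => by simp [hLf, hL'g, segV_apply]⟩

section ProjectivePoints

variable {k : Type*} [Field k] {n : ℕ}

lemma mk_mem_projLin_iff {W : Submodule k (Fin n → k)} {v : Fin n → k} (hv : v ≠ 0) :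
    mk k v hv ∈ projLin W ↔ v ∈ W := by
  obtain ⟨c, hc⟩ := exists_smul_eq_mk_rep k v hv
  change (mk k v hv).rep ∈ W ↔ _
  rw [← hc, Submodule.smul_mem_iff']

lemma mk_mem_projLin_ker_iff {m : ℕ} {π : (Fin n → k) →ₗ[k] (Fin m → k)} {v : Fin n → k}
    (hv : v ≠ 0) : mk k v hv ∈ projLin (LinearMap.ker π) ↔ π v = 0 :=
  mk_mem_projLin_iff hv

lemma map_rep_mk_eq_zero_iff {V : Type*} [AddCommGroup V] [Module k V]
    (f : (Fin n → k) →ₗ[k] V) {v : Fin n → k} (hv : v ≠ 0) :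
    f (mk k v hv).rep = 0 ↔ f v = 0 := by
  obtain ⟨c, hc⟩ := exists_smul_eq_mk_rep k v hv
  rw [← hc, Units.smul_def, map_smul, smul_eq_zero, or_iff_right c.ne_zero]

lemma projFrom_mk {π : (Fin 6 → k) →ₗ[k] (Fin 4 → k)} {v : Fin 6 → k} (hv : v ≠ 0)
    (h : π v ≠ 0) : projFrom k π (mk k v hv) = mk k (π v) h := by
  have h' : π (mk k v hv).rep ≠ 0 := (map_rep_mk_eq_zero_iff π hv).not.2 h
  rw [projFrom, dif_pos h', mk_eq_mk_iff]
  obtain ⟨c, hc⟩ := exists_smul_eq_mk_rep k v hv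
  exact ⟨c, by rw [← hc, Units.smul_def, Units.smul_def, map_smul]⟩

lemma segre_mk {x : Fin 3 → k} {y : Fin 2 → k} (hx : x ≠ 0) (hy : y ≠ 0) :
    segre k (mk k x hx) (mk k y hy) = mk k (segV k x y) (segV_ne_zero k hx hy) := by
  obtain ⟨c, hc⟩ := exists_smul_eq_mk_rep k x hx
  obtain ⟨d, hd⟩ := exists_smul_eq_mk_rep k y hy
  rw [segre, mk_eq_mk_iff']
  exact ⟨c * d, by rw [← hc, ← hd, Units.smul_def, Units.smul_def, segV_smul_left,
    segV_smul_right, smul_smul, mul_comm]⟩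

end ProjectivePoints

section BirationalInverse

variable {k : Type*} [Field k] {l : Submodule k (Fin 3 → k)} {a : Pk k 2}
  {α : Fin 3 → k} {β : Fin 2 → k} {π : (Fin 6 → k) →ₗ[k] (Fin 4 → k)}
  {ξ : (Fin 4 → k) →ₗ[k] (Fin 3 → k)} {η : (Fin 4 → k) →ₗ[k] (Fin 2 → k)}
  (hα : ∀ u, α ⬝ᵥ u = 0 ↔ u ∈ l) (hβ : ∀ v, β ⬝ᵥ v = 0 ↔ v ∈ k ∙ a.rep)
  (hπ : Function.Surjective π) (hker : LinearMap.ker π = WL k l a)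
  (hξ : ∀ z, ξ (π z) = segMulVec β z) (hη : ∀ z, η (π z) = segVecMul α z)
include hπ hξ hη

lemma dotProduct_factor_eq (r : Fin 4 → k) :
    α ⬝ᵥ ξ r = β ⬝ᵥ η r := by
  obtain ⟨z, rfl⟩ := hπ r
  rw [hξ, hη, dotProduct_segMulVec]

include hα hβ hker in
lemma eq_of_factor_eq {r r' : Fin 4 → k} (h₁ : ξ r = ξ r') (h₂ : η r = η r') : r = r' := by
  obtain ⟨z, hz⟩ := hπ (r - r')
  have hzWL : z ∈ WL k l a := by
    rw [WL_eq_ker_inf_ker hα hβ]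
    refine ⟨?_, ?_⟩
    · change segMulVec β z = 0
      rw [← hξ, hz, map_sub, h₁, sub_self]
    · change segVecMul α z = 0
      rw [← hη, hz, map_sub, h₂, sub_self]
  rw [← hker, LinearMap.mem_ker, hz, sub_eq_zero] at hzWL
  exact hzWL

include hα hβ hker

lemma image_F1set_diff_eq (hl : l ≠ ⊤) :
    projFrom k π '' (F1set k a \ projLin (WL k l a)) = {q | ξ q.rep = 0} := by
  ext q
  constructor
  · rintro ⟨_, ⟨⟨p, rfl⟩, hpL⟩, rfl⟩
    have hs := (hker ▸ mk_mem_projLin_ker_iff _).not.1 hpL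
    rw [segre, projFrom_mk _ hs]
    refine (map_rep_mk_eq_zero_iff ξ _).2 ?_
    rw [hξ, segMulVec_segV, (hβ _).2 (Submodule.mem_span_singleton_self _), zero_smul]
  · intro (hq : ξ q.rep = 0)
    obtain ⟨t, ht⟩ : ∃ t : k, t • a.rep = η q.rep := Submodule.mem_span_singleton.1 <|
      (hβ _).1 <| by rw [← dotProduct_factor_eq hπ hξ hη, hq, dotProduct_zero]
    have ht0 : t ≠ 0 := by
      rintro rfl
      refine q.rep_nonzero (eq_of_factor_eq hα hβ hπ hker hξ hη ?_ ?_) <;>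
        simp [hq, ← ht]
    obtain ⟨x, -, hx⟩ := SetLike.exists_of_lt hl.lt_top
    have hβa : β ⬝ᵥ a.rep = 0 := (hβ _).2 (Submodule.mem_span_singleton_self _)
    have hπs : π (segV k x a.rep) = ((α ⬝ᵥ x) * t⁻¹) • q.rep := by
      refine eq_of_factor_eq hα hβ hπ hker hξ hη ?_ ?_
      · simp [hξ, segMulVec_segV, hβa, hq]
      · rw [hη, segVecMul_segV, map_smul, ← ht, smul_smul, inv_mul_cancel_right₀ ht0]
    have hx0 : x ≠ 0 := by rintro rfl; exact hx l.zero_mem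
    have hs : π (segV k x a.rep) ≠ 0 := by
      rw [hπs]
      exact smul_ne_zero (mul_ne_zero (mt (hα x).1 hx) (inv_ne_zero ht0)) q.rep_nonzero
    have hseg : segre k (mk k x hx0) a =
        mk k (segV k x a.rep) (segV_ne_zero k hx0 a.rep_nonzero) := by
      conv_lhs => rw [← mk_rep a]
      exact segre_mk hx0 a.rep_nonzero
    refine ⟨segre k (mk k x hx0) a, ⟨⟨mk k x hx0, rfl⟩, ?_⟩, ?_⟩ <;> rw [hseg]
    · exact (hker ▸ mk_mem_projLin_ker_iff _).not.2 hs
    · rw [projFrom_mk _ hs]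
      conv_rhs => rw [← mk_rep q]
      exact (mk_eq_mk_iff' _ _ _ _ _).2 ⟨_, hπs.symm⟩

lemma image_F2set_diff_eq :
    projFrom k π '' (F2set k l \ projLin (WL k l a)) = {q | η q.rep = 0} := by
  ext q
  constructor
  · rintro ⟨_, ⟨⟨p, p', hp, rfl⟩, hpL⟩, rfl⟩
    have hs := (hker ▸ mk_mem_projLin_ker_iff _).not.1 hpL
    rw [segre, projFrom_mk _ hs]
    refine (map_rep_mk_eq_zero_iff η _).2 ?_
    rw [hη, segVecMul_segV, (hα _).2 hp, zero_smul]
  · intro (hq : η q.rep = 0)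
    obtain ⟨y, -, hy⟩ := SetLike.exists_of_lt <| Submodule.lt_top_of_finrank_lt_finrank
      (s := k ∙ a.rep) (by rw [finrank_span_singleton a.rep_nonzero]; simp)
    have hβy : β ⬝ᵥ y ≠ 0 := mt (hβ y).1 hy
    set x := ξ q.rep
    have hx : x ∈ l := (hα x).1 <| by rw [dotProduct_factor_eq hπ hξ hη, hq, dotProduct_zero]
    have hπs : π (segV k x y) = (β ⬝ᵥ y) • q.rep := by
      refine eq_of_factor_eq hα hβ hπ hker hξ hη ?_ ?_
      · rw [hξ, segMulVec_segV, map_smul]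
      · rw [hη, segVecMul_segV, (hα x).2 hx, map_smul, hq, zero_smul, smul_zero]
    have hs : π (segV k x y) ≠ 0 := by
      rw [hπs]; exact smul_ne_zero hβy q.rep_nonzero
    have hx0 : x ≠ 0 := fun h => hs (by rw [h, segV_eq_zero_iff.2 (Or.inl rfl), map_zero])
    have hy0 : y ≠ 0 := by rintro rfl; exact hy (Submodule.zero_mem _)
    refine ⟨segre k (mk k x hx0) (mk k y hy0), ⟨⟨mk k x hx0, mk k y hy0,
      (mk_mem_projLin_iff hx0).2 hx, rfl⟩, ?_⟩, ?_⟩ <;> rw [segre_mk]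
    · exact (hker ▸ mk_mem_projLin_ker_iff _).not.2 hs
    · rw [projFrom_mk _ hs]
      conv_rhs => rw [← mk_rep q]
      exact (mk_eq_mk_iff' _ _ _ _ _).2 ⟨_, hπs.symm⟩

omit hπ hker in
lemma exists_mk_segV_projFrom_eq {p : Pk k 6} (hp : p ∈ SegreX k) (h₁ : p ∉ F1set k a)
    (h₂ : p ∉ F2set k l) :
    ∃ h : segV k (ξ (projFrom k π p).rep) (η (projFrom k π p).rep) ≠ 0, mk k _ h = p := by
  obtain ⟨p, p', rfl⟩ := hp
  have hαp : α ⬝ᵥ p.rep ≠ 0 := fun h => h₂ ⟨p, p', (hα _).1 h, rfl⟩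
  have hβp' : β ⬝ᵥ p'.rep ≠ 0 := by
    intro h
    obtain ⟨t, ht⟩ := Submodule.mem_span_singleton.1 ((hβ _).1 h)
    refine h₁ ⟨p, congrArg (segre k p) ?_⟩
    rw [← mk_rep p', ← mk_rep a, mk_eq_mk_iff']
    exact ⟨t, ht⟩
  set s := segV k p.rep p'.rep
  have hs : π s ≠ 0 := fun h => by
    have h' := hη s
    rw [h, map_zero, segVecMul_segV] at h'
    exact smul_ne_zero hαp p'.rep_nonzero h'.symm
  obtain ⟨c, hc⟩ := exists_smul_eq_mk_rep k (π s) hs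
  have hQ : segV k (ξ (projFrom k π (segre k p p')).rep) (η (projFrom k π (segre k p p')).rep)
      = ((c * (β ⬝ᵥ p'.rep)) * (c * (α ⬝ᵥ p.rep)) : k) • s := by
    rw [segre, projFrom_mk _ hs, ← hc, Units.smul_def, map_smul, map_smul, hξ, hη,
      segMulVec_segV, segVecMul_segV, smul_smul, smul_smul, segV_smul_left, segV_smul_right,
      smul_smul]
  refine ⟨hQ ▸ smul_ne_zero ?_ (segV_ne_zero k p.rep_nonzero p'.rep_nonzero),
    (mk_eq_mk_iff' _ _ _ _ _).2 ⟨_, hQ.symm⟩⟩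
  exact mul_ne_zero (mul_ne_zero c.ne_zero hβp') (mul_ne_zero c.ne_zero hαp)

end BirationalInverse

theorem statement4_general (k : Type*) [Field k]
    (a : Pk k 2) (l : Submodule k (Fin 3 → k)) (hl : Module.finrank k l = 2)
    (π : (Fin 6 → k) →ₗ[k] (Fin 4 → k)) (hπ : Function.Surjective π)
    (hker : LinearMap.ker π = WL k l a)
    (P0 : Pk k 4) (WB : Submodule k (Fin 4 → k))
    (hP0 : projFrom k π '' (F1set k a \ projLin (WL k l a)) = {P0})
    (hB : projFrom k π '' (F2set k l \ projLin (WL k l a)) = projLin WB) :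
    ∃ Q : Fin 6 → MvPolynomial (Fin 4) k,
      (∀ i, (Q i).IsHomogeneous 2) ∧
      {q : Pk k 4 | ∀ i, MvPolynomial.eval q.rep (Q i) = 0} = projLin WB ∪ {P0} ∧
      ∀ p ∈ SegreX k, p ∉ F1set k a → p ∉ F2set k l →
        ∃ h : (fun i => MvPolynomial.eval (projFrom k π p).rep (Q i)) ≠ 0,
          Projectivization.mk k _ h = p := by
  obtain ⟨α, hα⟩ := exists_dotProduct_eq_zero_iff_mem l (by rw [hl])
  obtain ⟨β, hβ⟩ := exists_dotProduct_eq_zero_iff_mem (k ∙ a.rep)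
    (by rw [finrank_span_singleton a.rep_nonzero])
  have hWL := WL_eq_ker_inf_ker hα hβ
  obtain ⟨ξ, hξ⟩ := LinearMap.exists_factor_of_ker_le hπ (hker ▸ hWL ▸ inf_le_left)
  obtain ⟨η, hη⟩ := LinearMap.exists_factor_of_ker_le hπ (hker ▸ hWL ▸ inf_le_right)
  have hltop : l ≠ ⊤ := fun h => by
    rw [h, finrank_top, Module.finrank_fin_fun] at hl; norm_num at hl
  obtain ⟨Q, hQ, hQeval⟩ := exists_isHomogeneous_two_eval_eq_segV ξ η
  refine ⟨Q, hQ, ?_, fun p hp h₁ h₂ => ?_⟩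
  · rw [← hB, ← hP0, image_F1set_diff_eq hα hβ hπ hker hξ hη hltop,
      image_F2set_diff_eq hα hβ hπ hker hξ hη]
    ext q
    have hzero : (∀ i, eval q.rep (Q i) = 0) ↔ segV k (ξ q.rep) (η q.rep) = 0 := by
      simp only [hQeval, funext_iff, Pi.zero_apply]
    simp [hzero, segV_eq_zero_iff, or_comm]
  · simpa only [hQeval] using exists_mk_segV_projFrom_eq hα hβ hξ hη hp h₁ h₂

/-- the birational inverse of the projection π_L : s(ℙ² × ℙ¹) ⇢ ℙ³ from the
line L = F₁ ∩ F₂ is given by a linear system of quadric surfaces of ℙ³ whose base locus is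
B ∪ {P}, where P = π_L(F₁) and B = π_L(F₂). -/
theorem statement4 (k : Type*) [Field k] [IsAlgClosed k]
    (a : Pk k 2) (l : Submodule k (Fin 3 → k)) (hl : Module.finrank k l = 2)
    (π : (Fin 6 → k) →ₗ[k] (Fin 4 → k)) (hπ : Function.Surjective π)
    (hker : LinearMap.ker π = WL k l a)
    (P0 : Pk k 4) (WB : Submodule k (Fin 4 → k))
    (hP0 : projFrom k π '' (F1set k a \ projLin (WL k l a)) = {P0})
    (hB : projFrom k π '' (F2set k l \ projLin (WL k l a)) = projLin WB) :
    ∃ Q : Fin 6 → MvPolynomial (Fin 4) k,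
      (∀ i, (Q i).IsHomogeneous 2) ∧
      {q : Pk k 4 | ∀ i, MvPolynomial.eval q.rep (Q i) = 0} = projLin WB ∪ {P0} ∧
      ∀ p ∈ SegreX k, p ∉ F1set k a → p ∉ F2set k l →
        ∃ h : (fun i => MvPolynomial.eval (projFrom k π p).rep (Q i)) ≠ 0,
          Projectivization.mk k _ h = p :=
  statement4_general k a l hl π hπ hker P0 WB hP0 hB
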